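/- arXiv:2409.14503 — 4 statements merged into one kernel-verified Lean document; each statement's English description precedes it below -/
import Mathlib

section
/- Let U and V be real inner product spaces of the same finite dimension n ≥ 1, and let T : U → V be a linear map. If ‖T‖_tr = n · ‖T‖ (where ‖T‖ is the operator norm), then T is a homothety: ⟨T u, T v⟩ = ‖T‖² · ⟨u, v⟩ for all u, v ∈ U; in particular ‖T u‖ = ‖T‖ · ‖u‖ for every u ∈ U. -/
/-!
By Cauchy–Schwarz, for orthonormal bases `(b i)` of `U` and `(c i)` of `V`,
`∑ |⟪T b_i, c_i⟫| ≤ ∑ ‖T b_i‖ ≤ √(n ∑ ‖T b_i‖²) = √(n tr(T*T))`, the last quantity not depending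
on the bases. So `‖T‖_tr = n ‖T‖` forces `n ‖T‖² ≤ ∑ ‖T b_i‖²` for every orthonormal basis, and
since each term is at most `‖T‖²`, every `‖T b_i‖` equals `‖T‖`. Every unit vector belongs to some
orthonormal basis, hence `T` multiplies all norms by `‖T‖`, and polarization gives the inner
products.
-/

open scoped RealInnerProductSpace

/-- The trace norm of a linear map `T : U → V`: the supremum over all orthonormal
bases `(u_i)` of `U` and `(v_i)` of `V` of `∑ i, |⟪T u_i, v_i⟫|`. -/
noncomputable def traceNorm {U V : Type*} [NormedAddCommGroup U] [InnerProductSpace ℝ U]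
    [NormedAddCommGroup V] [InnerProductSpace ℝ V] (n : ℕ) (T : U →ₗ[ℝ] V) : ℝ :=
  ⨆ b : OrthonormalBasis (Fin n) ℝ U, ⨆ c : OrthonormalBasis (Fin n) ℝ V,
    ∑ i, |⟪T (b i), c i⟫|

open Finset

theorem OrthonormalBasis.exists_apply_eq_of_norm_eq_one {𝕜 E ι : Type*} [RCLike 𝕜]
    [NormedAddCommGroup E] [InnerProductSpace 𝕜 E] [FiniteDimensional 𝕜 E] [Fintype ι]
    (card_ι : Module.finrank 𝕜 E = Fintype.card ι) {u : E} (hu : ‖u‖ = 1) :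
    ∃ (b : OrthonormalBasis ι 𝕜 E) (i : ι), b i = u := by
  have : Nontrivial E := nontrivial_of_ne u 0 (norm_ne_zero_iff.1 (by simp [hu]))
  obtain ⟨i⟩ : Nonempty ι := Fintype.card_pos_iff.1 (card_ι ▸ Module.finrank_pos)
  have hortho : Orthonormal 𝕜 (({i} : Set ι).domRestrict fun _ => u) :=
    orthonormal_subsingleton_iff.2 fun _ => hu
  obtain ⟨b, hb⟩ := hortho.exists_orthonormalBasis_extension_of_card_eq card_ι
  exact ⟨b, i, hb i rfl⟩

section

variable {U V : Type*} [NormedAddCommGroup U] [InnerProductSpace ℝ U]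
  [NormedAddCommGroup V] [InnerProductSpace ℝ V]

theorem LinearMap.norm_map_eq_mul_norm_of_norm_eq_one {T : U →ₗ[ℝ] V} {c : ℝ}
    (hT : ∀ u : U, ‖u‖ = 1 → ‖T u‖ = c) (u : U) : ‖T u‖ = c * ‖u‖ := by
  rcases eq_or_ne u 0 with rfl | hu
  · simp
  have hu' : ‖u‖ ≠ 0 := norm_ne_zero_iff.2 hu
  have hunit : ‖‖u‖⁻¹ • u‖ = 1 := by rw [norm_smul, norm_inv, norm_norm, inv_mul_cancel₀ hu']
  calc ‖T u‖ = ‖T (‖u‖ • ‖u‖⁻¹ • u)‖ := by rw [smul_inv_smul₀ hu']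
    _ = c * ‖u‖ := by rw [map_smul, norm_smul, norm_norm, hT _ hunit, mul_comm]

theorem LinearMap.inner_map_map_of_norm_map_eq_mul_norm {T : U →ₗ[ℝ] V} {c : ℝ}
    (hT : ∀ u : U, ‖T u‖ = c * ‖u‖) (u v : U) : ⟪T u, T v⟫ = c ^ 2 * ⟪u, v⟫ := by
  rw [real_inner_eq_norm_add_mul_self_sub_norm_mul_self_sub_norm_mul_self_div_two,
    real_inner_eq_norm_add_mul_self_sub_norm_mul_self_sub_norm_mul_self_div_two u v,
    ← map_add, hT, hT, hT]
  ring

theorem OrthonormalBasis.norm_apply_eq_opNorm_of_card_mul_le {ι : Type*} [Fintype ι]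
    (A : U →L[ℝ] V) (b : OrthonormalBasis ι ℝ U)
    (h : Fintype.card ι * ‖A‖ ^ 2 ≤ ∑ i, ‖A (b i)‖ ^ 2) (i : ι) : ‖A (b i)‖ = ‖A‖ := by
  have hle : ∀ j ∈ univ, ‖A (b j)‖ ^ 2 ≤ ‖A‖ ^ 2 := fun j _ => by
    gcongr
    simpa [b.orthonormal.1 j] using A.le_opNorm (b j)
  have hsum : ∑ j, ‖A (b j)‖ ^ 2 = ∑ _j : ι, ‖A‖ ^ 2 :=
    le_antisymm (sum_le_sum hle) (by simpa using h)
  exact (pow_left_inj₀ (norm_nonneg _) (norm_nonneg _) two_ne_zero).1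
    ((sum_eq_sum_iff_of_le hle).1 hsum i (mem_univ i))

variable [FiniteDimensional ℝ U] [FiniteDimensional ℝ V]

theorem LinearMap.trace_adjoint_comp_self_eq_sum_norm_sq {ι : Type*} [Fintype ι]
    (T : U →ₗ[ℝ] V) (b : OrthonormalBasis ι ℝ U) :
    LinearMap.trace ℝ U (LinearMap.adjoint T ∘ₗ T) = ∑ i, ‖T (b i)‖ ^ 2 := by
  rw [LinearMap.trace_eq_sum_inner _ b]
  refine sum_congr rfl fun i _ => ?_
  rw [LinearMap.comp_apply, LinearMap.adjoint_inner_right, real_inner_self_eq_norm_sq]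

theorem traceNorm_le_sqrt_mul_trace_adjoint_comp_self (n : ℕ) (T : U →ₗ[ℝ] V) :
    traceNorm n T ≤ √(n * LinearMap.trace ℝ U (LinearMap.adjoint T ∘ₗ T)) := by
  refine Real.iSup_le (fun b => Real.iSup_le (fun c => ?_) (Real.sqrt_nonneg _))
    (Real.sqrt_nonneg _)
  calc ∑ i, |⟪T (b i), c i⟫| ≤ ∑ i, ‖T (b i)‖ := sum_le_sum fun i _ => by
        simpa [c.orthonormal.1 i] using abs_real_inner_le_norm (T (b i)) (c i)
    _ ≤ √(n * ∑ i, ‖T (b i)‖ ^ 2) := Real.le_sqrt_of_sq_le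
      (by simpa using sq_sum_le_card_mul_sum_sq (s := univ) (f := fun i => ‖T (b i)‖))
    _ = _ := by rw [T.trace_adjoint_comp_self_eq_sum_norm_sq b]

end

theorem homothety_of_traceNorm_eq_dim_mul_opNorm_general {U V : Type*}
    [NormedAddCommGroup U] [InnerProductSpace ℝ U]
    [NormedAddCommGroup V] [InnerProductSpace ℝ V]
    [FiniteDimensional ℝ U] [FiniteDimensional ℝ V]
    (n : ℕ) (hn : 1 ≤ n) (hU : Module.finrank ℝ U = n)
    (T : U →ₗ[ℝ] V)
    (h : traceNorm n T = n * ‖LinearMap.toContinuousLinearMap T‖) :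
    (∀ u v : U, ⟪T u, T v⟫ = ‖LinearMap.toContinuousLinearMap T‖ ^ 2 * ⟪u, v⟫) ∧
      ∀ u : U, ‖T u‖ = ‖LinearMap.toContinuousLinearMap T‖ * ‖u‖ := by
  set A := LinearMap.toContinuousLinearMap T
  have hn' : (0 : ℝ) < n := by exact_mod_cast hn
  have htrace : n * ‖A‖ ^ 2 ≤ LinearMap.trace ℝ U (LinearMap.adjoint T ∘ₗ T) := by
    have htr := T.isPositive_adjoint_comp_self.trace_nonneg
    have hsq := (Real.le_sqrt (by positivity) (by positivity)).1
      (h ▸ traceNorm_le_sqrt_mul_trace_adjoint_comp_self n T)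
    rw [mul_pow, sq (n : ℝ), mul_assoc] at hsq
    exact le_of_mul_le_mul_left hsq hn'
  have hunit : ∀ u : U, ‖u‖ = 1 → ‖T u‖ = ‖A‖ := by
    intro u hu
    obtain ⟨b, i, rfl⟩ := OrthonormalBasis.exists_apply_eq_of_norm_eq_one (ι := Fin n)
      (by simpa using hU) hu
    refine b.norm_apply_eq_opNorm_of_card_mul_le A ?_ i
    simpa [A, T.trace_adjoint_comp_self_eq_sum_norm_sq b] using htrace
  have hnorm := LinearMap.norm_map_eq_mul_norm_of_norm_eq_one hunit
  exact ⟨LinearMap.inner_map_map_of_norm_map_eq_mul_norm hnorm, hnorm⟩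

/-- If the trace norm of `T` equals `n` times its operator norm, then `T` is a
homothety: `⟪T u, T v⟫ = ‖T‖² ⟪u, v⟫` for all `u, v`; in particular
`‖T u‖ = ‖T‖ ‖u‖` for every `u`. -/
theorem homothety_of_traceNorm_eq_dim_mul_opNorm {U V : Type*}
    [NormedAddCommGroup U] [InnerProductSpace ℝ U]
    [NormedAddCommGroup V] [InnerProductSpace ℝ V]
    [FiniteDimensional ℝ U] [FiniteDimensional ℝ V]
    (n : ℕ) (hn : 1 ≤ n) (hU : Module.finrank ℝ U = n) (hV : Module.finrank ℝ V = n)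
    (T : U →ₗ[ℝ] V)
    (h : traceNorm n T = n * ‖LinearMap.toContinuousLinearMap T‖) :
    (∀ u v : U, ⟪T u, T v⟫ = ‖LinearMap.toContinuousLinearMap T‖ ^ 2 * ⟪u, v⟫) ∧
      ∀ u : U, ‖T u‖ = ‖LinearMap.toContinuousLinearMap T‖ * ‖u‖ :=
  homothety_of_traceNorm_eq_dim_mul_opNorm_general n hn hU T h
end

section
/- Let U and V be real inner product spaces of the same finite dimension n ≥ 1, and let T : U → V be a linear map with ‖T x‖ ≤ ‖x‖ for all x ∈ U. If ‖T‖_tr = n, then T is a linear isometry, i.e. ‖T u‖ = ‖u‖ for every u ∈ U (equivalently ⟨T u, T v⟩ = ⟨u, v⟩ for all u, v ∈ U). -/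
/-! For orthonormal bases `(b_i)`, `(c_i)`, AM–GM and `‖c_i‖ = 1` give
`|⟪T b_i, c_i⟫| ≤ (‖T b_i‖² + 1) / 2`, and `∑ ‖T b_i‖²` is the basis-independent quantity
`tr (T* T)`. Hence `n = ‖T‖_tr ≤ (n + tr (T* T)) / 2`, i.e. `tr (T* T) ≥ n`. Since `T` is a
contraction every summand `‖T b_i‖²` is at most `1`, so all of them equal `1` in every orthonormal
basis; as any unit vector belongs to some orthonormal basis, `T` preserves norms. -/

open scoped RealInnerProductSpace

section

variable {U V : Type*} [NormedAddCommGroup U] [InnerProductSpace ℝ U]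
  [NormedAddCommGroup V] [InnerProductSpace ℝ V]

theorem abs_real_inner_le_half_add_sq (x y : V) : |⟪x, y⟫| ≤ (‖x‖ ^ 2 + ‖y‖ ^ 2) / 2 := by
  nlinarith [abs_real_inner_le_norm x y, sq_nonneg (‖x‖ - ‖y‖)]

theorem exists_orthonormalBasis_mem [FiniteDimensional ℝ U] {u : U} (hu : ‖u‖ = 1) :
    ∃ (s : Finset U) (b : OrthonormalBasis s ℝ U) (i : s), b i = u := by
  have hortho : Orthonormal ℝ ((↑) : ({u} : Set U) → U) := by
    simpa [orthonormal_subsingleton_iff] using hu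
  obtain ⟨s, b, hsub, hb⟩ := hortho.exists_orthonormalBasis_extension
  exact ⟨s, b, ⟨u, hsub rfl⟩, by rw [hb]⟩

theorem OrthonormalBasis.norm_apply_sq_le_one {ι : Type*} [Fintype ι] {T : U →ₗ[ℝ] V}
    (hT : ∀ x, ‖T x‖ ≤ ‖x‖) (b : OrthonormalBasis ι ℝ U) (i : ι) : ‖T (b i)‖ ^ 2 ≤ 1 :=
  pow_le_one₀ (norm_nonneg _) ((hT _).trans_eq (b.orthonormal.1 i))

variable [FiniteDimensional ℝ U] [FiniteDimensional ℝ V]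

theorem OrthonormalBasis.sum_norm_sq_apply_eq_trace {ι : Type*} [Fintype ι]
    (b : OrthonormalBasis ι ℝ U) (T : U →ₗ[ℝ] V) :
    ∑ i, ‖T (b i)‖ ^ 2 = LinearMap.trace ℝ U (LinearMap.adjoint T ∘ₗ T) := by
  simp [LinearMap.trace_eq_sum_inner _ b, LinearMap.adjoint_inner_right]

theorem trace_adjoint_comp_self_nonneg (T : U →ₗ[ℝ] V) :
    0 ≤ LinearMap.trace ℝ U (LinearMap.adjoint T ∘ₗ T) := by
  rw [← (stdOrthonormalBasis ℝ U).sum_norm_sq_apply_eq_trace]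
  positivity

theorem traceNorm_le_half_add_trace_adjoint_comp_self (n : ℕ) (T : U →ₗ[ℝ] V) :
    traceNorm n T ≤ (n + LinearMap.trace ℝ U (LinearMap.adjoint T ∘ₗ T)) / 2 := by
  have hbound : 0 ≤ (n + LinearMap.trace ℝ U (LinearMap.adjoint T ∘ₗ T)) / 2 := by
    linarith [n.cast_nonneg (α := ℝ), trace_adjoint_comp_self_nonneg T]
  refine Real.iSup_le (fun b => Real.iSup_le (fun c => ?_) hbound) hbound
  calc ∑ i, |⟪T (b i), c i⟫| ≤ ∑ i, (‖T (b i)‖ ^ 2 + 1) / 2 :=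
        Finset.sum_le_sum fun i _ => by
          simpa [c.orthonormal.1 i] using abs_real_inner_le_half_add_sq (T (b i)) (c i)
    _ = _ := by
        rw [← Finset.sum_div, Finset.sum_add_distrib, b.sum_norm_sq_apply_eq_trace]
        simp [add_comm]

variable {T : U →ₗ[ℝ] V} (hT : ∀ x, ‖T x‖ ≤ ‖x‖)
include hT

theorem trace_adjoint_comp_self_le_finrank :
    LinearMap.trace ℝ U (LinearMap.adjoint T ∘ₗ T) ≤ Module.finrank ℝ U := by
  let b := stdOrthonormalBasis ℝ U
  calc LinearMap.trace ℝ U (LinearMap.adjoint T ∘ₗ T) = ∑ i, ‖T (b i)‖ ^ 2 :=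
        (b.sum_norm_sq_apply_eq_trace T).symm
    _ ≤ ∑ _i, 1 := Finset.sum_le_sum fun i _ => b.norm_apply_sq_le_one hT i
    _ = Module.finrank ℝ U := by rw [Module.finrank_eq_card_basis b.toBasis]; simp

theorem OrthonormalBasis.norm_apply_eq_one_of_trace_eq_finrank {ι : Type*} [Fintype ι]
    (htr : LinearMap.trace ℝ U (LinearMap.adjoint T ∘ₗ T) = Module.finrank ℝ U)
    (b : OrthonormalBasis ι ℝ U) (i : ι) : ‖T (b i)‖ = 1 := by
  have hdefect : ∑ j, (1 - ‖T (b j)‖ ^ 2) = 0 := by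
    rw [Finset.sum_sub_distrib, b.sum_norm_sq_apply_eq_trace, htr,
      Module.finrank_eq_card_basis b.toBasis]
    simp
  have hi := (Finset.sum_eq_zero_iff_of_nonneg fun j _ =>
    sub_nonneg.mpr (b.norm_apply_sq_le_one hT j)).mp hdefect i (Finset.mem_univ i)
  nlinarith [norm_nonneg (T (b i))]

theorem norm_map_of_trace_adjoint_comp_self_eq_finrank
    (htr : LinearMap.trace ℝ U (LinearMap.adjoint T ∘ₗ T) = Module.finrank ℝ U) (u : U) :
    ‖T u‖ = ‖u‖ := by
  rcases eq_or_ne u 0 with rfl | hu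
  · simp
  have hnorm : ‖‖u‖⁻¹ • u‖ = 1 := by
    rw [norm_smul, norm_inv, norm_norm, inv_mul_cancel₀ (norm_ne_zero_iff.mpr hu)]
  obtain ⟨s, b, i, hbi⟩ := exists_orthonormalBasis_mem hnorm
  have hunit := b.norm_apply_eq_one_of_trace_eq_finrank hT htr i
  rw [hbi, map_smul, norm_smul, norm_inv, norm_norm] at hunit
  field_simp at hunit
  exact hunit

end

theorem isometry_of_traceNorm_eq_dim_general {U V : Type*}
    [NormedAddCommGroup U] [InnerProductSpace ℝ U]
    [NormedAddCommGroup V] [InnerProductSpace ℝ V]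
    [FiniteDimensional ℝ U] [FiniteDimensional ℝ V]
    (n : ℕ) (hU : Module.finrank ℝ U = n)
    (T : U →ₗ[ℝ] V)
    (hcontr : ∀ x : U, ‖T x‖ ≤ ‖x‖)
    (h : traceNorm n T = n) :
    (∀ u : U, ‖T u‖ = ‖u‖) ∧ ∀ u v : U, ⟪T u, T v⟫ = ⟪u, v⟫ := by
  have hle := trace_adjoint_comp_self_le_finrank hcontr
  have hge := traceNorm_le_half_add_trace_adjoint_comp_self n T
  subst hU
  have hiso := norm_map_of_trace_adjoint_comp_self_eq_finrank hcontr (by linarith)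
  exact ⟨hiso, (LinearMap.norm_map_iff_inner_map_map T).mp hiso⟩

/-- If `T` is norm non-increasing and its trace norm equals `n`, then `T` is a
linear isometry: `‖T u‖ = ‖u‖` for all `u`, equivalently `⟪T u, T v⟫ = ⟪u, v⟫`. -/
theorem isometry_of_traceNorm_eq_dim {U V : Type*}
    [NormedAddCommGroup U] [InnerProductSpace ℝ U]
    [NormedAddCommGroup V] [InnerProductSpace ℝ V]
    [FiniteDimensional ℝ U] [FiniteDimensional ℝ V]
    (n : ℕ) (hn : 1 ≤ n) (hU : Module.finrank ℝ U = n) (hV : Module.finrank ℝ V = n)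
    (T : U →ₗ[ℝ] V)
    (hcontr : ∀ x : U, ‖T x‖ ≤ ‖x‖)
    (h : traceNorm n T = n) :
    (∀ u : U, ‖T u‖ = ‖u‖) ∧ ∀ u v : U, ⟪T u, T v⟫ = ⟪u, v⟫ :=
  isometry_of_traceNorm_eq_dim_general n hU T hcontr h
end

section
/- Let U and V be oriented real inner product spaces of the same finite dimension n ≥ 2, and let T : U → V be a linear map that is not invertible. Then [T]_tr = ‖T‖_tr. -/
/-! By the singular value decomposition there are orthonormal bases `(b i)` of `U` and `(c i)`
of `V` with `T (b i) = σ i • c i` and `σ i ≥ 0`. Expanding `⟪T (p i), q i⟫` in these bases, the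
inequality `|x y| ≤ (x² + y²) / 2` and Parseval bound every sum `∑ i, |⟪T (p i), q i⟫|` by
`∑ i, σ i`, and `(b, c)` attains this bound. Since `T` is not invertible, some `σ i₀` vanishes;
negating `b i₀` and/or `c i₀` then makes both bases positively oriented without breaking
`T (b i) = σ i • c i`, so the oriented sums attain `∑ i, σ i` as well. -/

open scoped RealInnerProductSpace

/-- The oriented trace of a linear map `T : U → V` between oriented inner product
spaces: the supremum over all positively oriented orthonormal bases `(u_i)` of `U`
and `(v_i)` of `V` of `∑ i, ⟪T u_i, v_i⟫`. -/
noncomputable def orientedTrace {U V : Type*} [NormedAddCommGroup U] [InnerProductSpace ℝ U]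
    [NormedAddCommGroup V] [InnerProductSpace ℝ V] (n : ℕ)
    (oU : Orientation ℝ U (Fin n)) (oV : Orientation ℝ V (Fin n)) (T : U →ₗ[ℝ] V) : ℝ :=
  ⨆ b : {b : OrthonormalBasis (Fin n) ℝ U // b.toBasis.orientation = oU},
  ⨆ c : {c : OrthonormalBasis (Fin n) ℝ V // c.toBasis.orientation = oV},
    ∑ i, ⟪T (b.val i), c.val i⟫

open Module

theorem ciSup_ciSup_eq_of_forall_le_of_eq {α β γ : Type*} [ConditionallyCompleteLattice γ]
    {f : α → β → γ} {a : γ} (hle : ∀ x y, f x y ≤ a) {x₀ : α} {y₀ : β} (h : f x₀ y₀ = a) :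
    ⨆ x, ⨆ y, f x y = a :=
  have : Nonempty β := ⟨y₀⟩
  have hx₀ : ⨆ y, f x₀ y = a := IsGreatest.csSup_eq ⟨⟨y₀, h⟩, Set.forall_mem_range.2 (hle x₀)⟩
  IsGreatest.csSup_eq ⟨⟨x₀, hx₀⟩, Set.forall_mem_range.2 fun x => ciSup_le (hle x)⟩

theorem OrthonormalBasis.exists_orientation_eq_and_forall_ne_apply_eq {ι E : Type*} [Fintype ι]
    [DecidableEq ι] [NormedAddCommGroup E] [InnerProductSpace ℝ E] (e : OrthonormalBasis ι ℝ E)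
    (o : Orientation ℝ E ι) (i₀ : ι) :
    ∃ e' : OrthonormalBasis ι ℝ E, e'.toBasis.orientation = o ∧
      (e' i₀ = e i₀ ∨ e' i₀ = -e i₀) ∧ ∀ i ≠ i₀, e' i = e i := by
  rcases e.toBasis.orientation_eq_or_eq_neg o with rfl | rfl
  · exact ⟨e, rfl, .inl rfl, fun _ _ => rfl⟩
  set f := e.toBasis.unitsSMul (Function.update 1 i₀ (-1))
  have hf : ∀ i, f i = if i = i₀ then -e i else e i := by
    intro i
    by_cases h : i = i₀ <;> simp [f, Module.Basis.unitsSMul_apply, h]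
  have hfo : Orthonormal ℝ f :=
    e.orthonormal.orthonormal_of_forall_eq_or_eq_neg fun i => by
      rw [hf]; split_ifs <;> simp
  refine ⟨f.toOrthonormalBasis hfo, ?_, .inr ?_, fun i hi => ?_⟩
  · rw [f.toBasis_toOrthonormalBasis hfo, Module.Basis.orientation_neg_single]
  · simp [hf]
  · simp [hf, hi]

section

variable {U V : Type*} [NormedAddCommGroup U] [InnerProductSpace ℝ U]
  [NormedAddCommGroup V] [InnerProductSpace ℝ V]

theorem LinearMap.exists_orthonormalBasis_apply_eq_singularValues_smul
    [FiniteDimensional ℝ U] [FiniteDimensional ℝ V] {n : ℕ} (T : U →ₗ[ℝ] V)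
    (hU : finrank ℝ U = n) (hV : finrank ℝ V = n) :
    ∃ (b : OrthonormalBasis (Fin n) ℝ U) (c : OrthonormalBasis (Fin n) ℝ V),
      ∀ i, T (b i) = T.singularValues i • c i := by
  set σ : Fin n → ℝ := fun i => T.singularValues i
  set b := T.isSymmetric_adjoint_comp_self.eigenvectorBasis hU
  have hTb : ∀ i j, ⟪T (b i), T (b j)⟫ = if i = j then σ i ^ 2 else 0 := by
    intro i j
    rw [← LinearMap.adjoint_inner_left, ← LinearMap.comp_apply,
      T.isSymmetric_adjoint_comp_self.apply_eigenvectorBasis, real_inner_smul_left,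
      orthonormal_iff_ite.mp b.orthonormal, T.sq_singularValues_fin hU]
    simp
  have horth : Orthonormal ℝ ({i | σ i ≠ 0}.domRestrict fun i => (σ i)⁻¹ • T (b i)) := by
    rw [orthonormal_iff_ite]
    rintro ⟨i, hi⟩ ⟨j, hj⟩
    simp only [Set.domRestrict_apply, real_inner_smul_left, real_inner_smul_right, hTb,
      Subtype.mk.injEq]
    split_ifs with hij
    · subst hij
      field_simp [show σ i ≠ 0 from hi]
    · simp
  obtain ⟨c, hc⟩ := horth.exists_orthonormalBasis_extension_of_card_eq (by simp [hV])
  refine ⟨b, c, fun i => ?_⟩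
  by_cases h : σ i = 0
  · rw [show T.singularValues i = 0 from h, zero_smul, ← inner_self_eq_zero (𝕜 := ℝ), hTb,
      if_pos rfl, h]
    ring
  · rw [hc i h, smul_smul, mul_inv_cancel₀ h, one_smul]

theorem LinearMap.exists_singularValues_eq_zero_of_not_injective [FiniteDimensional ℝ U]
    [FiniteDimensional ℝ V] {n : ℕ} {T : U →ₗ[ℝ] V} (hU : finrank ℝ U = n)
    (hT : ¬ Function.Injective T) : ∃ i : Fin n, T.singularValues i = 0 := by
  rw [T.injective_iff_forall_lt_finrank_singularValues_pos, hU] at hT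
  push Not at hT
  obtain ⟨i, hi, hσ⟩ := hT
  exact ⟨⟨i, hi⟩, le_antisymm hσ (T.singularValues_nonneg i)⟩

variable {ι : Type*} [Fintype ι] {T : U →ₗ[ℝ] V} {b : OrthonormalBasis ι ℝ U}
  {c : OrthonormalBasis ι ℝ V} {σ : ι → ℝ}

theorem inner_apply_eq_sum_of_apply_eq_smul (hT : ∀ i, T (b i) = σ i • c i) (x : U) (y : V) :
    ⟪T x, y⟫ = ∑ j, σ j * ⟪b j, x⟫ * ⟪c j, y⟫ := by
  conv_lhs => rw [← b.sum_repr' x]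
  simp only [map_sum, map_smul, hT, smul_smul, sum_inner, real_inner_smul_left]
  exact Finset.sum_congr rfl fun j _ => by ring

theorem sum_abs_inner_apply_le_of_apply_eq_smul (hσ : ∀ i, 0 ≤ σ i)
    (hT : ∀ i, T (b i) = σ i • c i) (p : OrthonormalBasis ι ℝ U)
    (q : OrthonormalBasis ι ℝ V) : ∑ i, |⟪T (p i), q i⟫| ≤ ∑ j, σ j := by
  have hterm : ∀ i j, |σ j * ⟪b j, p i⟫ * ⟪c j, q i⟫| ≤
      σ j * (⟪b j, p i⟫ ^ 2 + ⟪c j, q i⟫ ^ 2) / 2 := by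
    intro i j
    rw [abs_mul, abs_mul, abs_of_nonneg (hσ j), mul_assoc, mul_div_assoc]
    refine mul_le_mul_of_nonneg_left ?_ (hσ j)
    nlinarith [two_mul_le_add_sq |⟪b j, p i⟫| |⟪c j, q i⟫|, sq_abs ⟪b j, p i⟫, sq_abs ⟪c j, q i⟫]
  calc ∑ i, |⟪T (p i), q i⟫|
      ≤ ∑ i, ∑ j, σ j * (⟪b j, p i⟫ ^ 2 + ⟪c j, q i⟫ ^ 2) / 2 := by
        refine Finset.sum_le_sum fun i _ => ?_
        rw [inner_apply_eq_sum_of_apply_eq_smul hT]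
        exact (Finset.abs_sum_le_sum_abs _ _).trans (Finset.sum_le_sum fun j _ => hterm i j)
    _ = ∑ j, σ j * (∑ i, ⟪b j, p i⟫ ^ 2 + ∑ i, ⟪c j, q i⟫ ^ 2) / 2 := by
        rw [Finset.sum_comm]
        simp only [← Finset.sum_div, ← Finset.mul_sum, Finset.sum_add_distrib]
    _ = ∑ j, σ j := by
        simp only [p.sum_sq_inner_left, q.sum_sq_inner_left, b.orthonormal.1, c.orthonormal.1]
        exact Finset.sum_congr rfl fun j _ => by ring

theorem inner_apply_eq_of_apply_eq_smul (hT : ∀ i, T (b i) = σ i • c i) (i : ι) :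
    ⟪T (b i), c i⟫ = σ i := by
  rw [hT, real_inner_smul_left, real_inner_self_eq_norm_sq, c.orthonormal.1, one_pow, mul_one]

theorem exists_orientation_eq_apply_eq_smul_of_eq_zero [DecidableEq ι]
    (hT : ∀ i, T (b i) = σ i • c i) {i₀ : ι} (hi₀ : σ i₀ = 0) (oU : Orientation ℝ U ι)
    (oV : Orientation ℝ V ι) :
    ∃ (b' : OrthonormalBasis ι ℝ U) (c' : OrthonormalBasis ι ℝ V),
      b'.toBasis.orientation = oU ∧ c'.toBasis.orientation = oV ∧
      ∀ i, T (b' i) = σ i • c' i := by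
  obtain ⟨b', hb'o, hb'i₀, hb'⟩ := b.exists_orientation_eq_and_forall_ne_apply_eq oU i₀
  obtain ⟨c', hc'o, -, hc'⟩ := c.exists_orientation_eq_and_forall_ne_apply_eq oV i₀
  refine ⟨b', c', hb'o, hc'o, fun i => ?_⟩
  by_cases hi : i = i₀
  · subst hi
    rcases hb'i₀ with h | h <;> simp [h, hT, hi₀]
  · rw [hb' i hi, hc' i hi, hT]

end

theorem orientedTrace_eq_traceNorm_of_not_bijective_general {U V : Type*}
    [NormedAddCommGroup U] [InnerProductSpace ℝ U]
    [NormedAddCommGroup V] [InnerProductSpace ℝ V]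
    [FiniteDimensional ℝ U] [FiniteDimensional ℝ V]
    (n : ℕ) (hU : Module.finrank ℝ U = n) (hV : Module.finrank ℝ V = n)
    (oU : Orientation ℝ U (Fin n)) (oV : Orientation ℝ V (Fin n)) (T : U →ₗ[ℝ] V)
    (hT : ¬ Function.Bijective T) :
    orientedTrace n oU oV T = traceNorm n T := by
  obtain ⟨b, c, hbc⟩ := T.exists_orthonormalBasis_apply_eq_singularValues_smul hU hV
  have hinj : ¬ Function.Injective T := fun hinj =>
    hT ⟨hinj, (T.injective_iff_surjective_of_finrank_eq_finrank (hU.trans hV.symm)).mp hinj⟩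
  obtain ⟨i₀, hi₀⟩ := T.exists_singularValues_eq_zero_of_not_injective hU hinj
  obtain ⟨b', c', hb', hc', hbc'⟩ := exists_orientation_eq_apply_eq_smul_of_eq_zero hbc hi₀ oU oV
  have hle := sum_abs_inner_apply_le_of_apply_eq_smul
    (fun i : Fin n => T.singularValues_nonneg i) hbc
  have htraceNorm : traceNorm n T = ∑ i : Fin n, T.singularValues i :=
    ciSup_ciSup_eq_of_forall_le_of_eq hle (x₀ := b) (y₀ := c) <| by
      simp only [inner_apply_eq_of_apply_eq_smul hbc, abs_of_nonneg (T.singularValues_nonneg _)]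
  have horientedTrace : orientedTrace n oU oV T = ∑ i : Fin n, T.singularValues i :=
    ciSup_ciSup_eq_of_forall_le_of_eq
      (fun p q => (Finset.sum_le_sum fun i _ => le_abs_self _).trans (hle p q))
      (x₀ := ⟨b', hb'⟩) (y₀ := ⟨c', hc'⟩)
      (Finset.sum_congr rfl fun i _ => inner_apply_eq_of_apply_eq_smul hbc' i)
  rw [horientedTrace, htraceNorm]

/-- If `T` is not invertible, then its oriented trace equals its trace norm. -/
theorem orientedTrace_eq_traceNorm_of_not_bijective {U V : Type*}
    [NormedAddCommGroup U] [InnerProductSpace ℝ U]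
    [NormedAddCommGroup V] [InnerProductSpace ℝ V]
    [FiniteDimensional ℝ U] [FiniteDimensional ℝ V]
    (n : ℕ) (hn : 2 ≤ n) (hU : Module.finrank ℝ U = n) (hV : Module.finrank ℝ V = n)
    (oU : Orientation ℝ U (Fin n)) (oV : Orientation ℝ V (Fin n)) (T : U →ₗ[ℝ] V)
    (hT : ¬ Function.Bijective T) :
    orientedTrace n oU oV T = traceNorm n T :=
  orientedTrace_eq_traceNorm_of_not_bijective_general n hU hV oU oV T hT
end

section
/- Let U and V be oriented real inner product spaces of the same finite dimension n ≥ 2, and let T : U → V be an invertible linear map with [T]_tr = ‖T‖_tr. Then T is orientation-preserving, i.e. T maps every positively oriented basis of U to a positively oriented basis of V. -/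
/-!
Write `T eᵢ = σᵢ fᵢ` with orthonormal bases `e`, `f` and `σᵢ > 0` (singular value decomposition);
the pair `(e, f)` shows `‖T‖_tr ≥ ∑ σᵢ`. For positively oriented orthonormal bases `b`, `c`, let
`Q` be the isometry `bᵢ ↦ cᵢ`; then `∑ ⟪T bᵢ, cᵢ⟫ = tr (Q⁻¹ T) = ∑ σᵢ ⟪fᵢ, Q eᵢ⟫`. If `T` reverses
orientation, the orthonormal bases `f` and `Q e` are oppositely oriented, so the isometry
`fᵢ ↦ Q eᵢ` has an eigenvector `x` with eigenvalue `-1`, and Cauchy–Schwarz applied to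
`⟪fᵢ - Q eᵢ, x⟫ = 2 ⟪fᵢ, x⟫` gives `1 - ⟪fᵢ, Q eᵢ⟫ ≥ 2 ⟪fᵢ, x⟫² / ‖x‖²`. Weighting by `σᵢ ≥ min σ`
yields `∑ ⟪T bᵢ, cᵢ⟫ ≤ ∑ σᵢ - 2 min σ`, hence `[T]_tr < ‖T‖_tr`.
-/

open scoped RealInnerProductSpace

theorem Module.Basis.det_neg_of_orientation_eq_neg {ι : Type*} [Fintype ι] [DecidableEq ι]
    {M : Type*} [AddCommGroup M] [Module ℝ M] (e f : Module.Basis ι ℝ M)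
    (h : e.orientation = -f.orientation) : e.det f < 0 := by
  refine lt_of_le_of_ne (not_lt.mp fun hpos => ?_) (e.isUnit_det f).ne_zero
  rw [← e.orientation_eq_iff_det_pos, h] at hpos
  exact Module.Ray.ne_neg_self f.orientation hpos.symm

section InnerProductSpace

variable {E : Type*} [NormedAddCommGroup E] [InnerProductSpace ℝ E]

theorem LinearIsometry.two_mul_inner_sq_le_of_apply_eq_neg (R : E →ₗᵢ[ℝ] E) {x : E}
    (hx : R x = -x) {u : E} (hu : ‖u‖ = 1) :
    2 * ⟪u, x⟫ ^ 2 ≤ (1 - ⟪u, R u⟫) * ‖x‖ ^ 2 := by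
  have hinner : ⟪u - R u, x⟫ = 2 * ⟪u, x⟫ := by
    have : ⟪R u, x⟫ = -⟪u, x⟫ := by rw [← R.inner_map_map u x, hx, inner_neg_right, neg_neg]
    rw [inner_sub_left, this]
    ring
  have hnorm : ‖u - R u‖ ^ 2 = 2 * (1 - ⟪u, R u⟫) := by
    rw [norm_sub_sq_real, R.norm_map, hu]
    ring
  have hCS := real_inner_mul_inner_self_le (u - R u) x
  rw [hinner, real_inner_self_eq_norm_sq, real_inner_self_eq_norm_sq, hnorm] at hCS
  nlinarith

theorem LinearMap.det_adjoint {𝕜 : Type*} [RCLike 𝕜] {F : Type*} [NormedAddCommGroup F]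
    [InnerProductSpace 𝕜 F] [FiniteDimensional 𝕜 F] (f : F →ₗ[𝕜] F) :
    LinearMap.det (LinearMap.adjoint f) = star (LinearMap.det f) := by
  let b := stdOrthonormalBasis 𝕜 F
  rw [← LinearMap.det_toMatrix b.toBasis, LinearMap.toMatrix_adjoint, Matrix.det_conjTranspose,
    LinearMap.det_toMatrix]

theorem LinearIsometryEquiv.exists_apply_eq_neg_of_det_neg [FiniteDimensional ℝ E]
    (R : E ≃ₗᵢ[ℝ] E) (hR : LinearMap.det R.toLinearMap < 0) : ∃ x ≠ 0, R x = -x := by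
  set S : E →ₗ[ℝ] E := 1 + R.toLinearMap with hSdef
  have hS : R.toLinearMap ∘ₗ LinearMap.adjoint S = S := by
    rw [hSdef, LinearEquiv.map_add, LinearMap.adjoint_one, R.adjoint_toLinearMap_eq_symm]
    ext x
    simp [add_comm]
  have hdet : LinearMap.det S = 0 := by
    have h := congrArg LinearMap.det hS
    rw [LinearMap.det_comp, LinearMap.det_adjoint, star_trivial] at h
    have : (LinearMap.det R.toLinearMap - 1) * LinearMap.det S = 0 := by linarith
    exact (mul_eq_zero.mp this).resolve_left (by linarith)
  obtain ⟨x, hxS, hx0⟩ := Submodule.exists_mem_ne_zero_of_ne_bot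
    (LinearMap.det_eq_zero_iff_ker_ne_bot.mp hdet)
  exact ⟨x, hx0, eq_neg_of_add_eq_zero_right (by simpa [S] using hxS)⟩

theorem OrthonormalBasis.sum_mul_inner_le_of_orientation_eq_neg {ι : Type*} [Fintype ι]
    [DecidableEq ι] (e g : OrthonormalBasis ι ℝ E)
    (h : e.toBasis.orientation = -g.toBasis.orientation) {σ : ι → ℝ} {m : ℝ}
    (hm : 0 ≤ m) (hσ : ∀ i, m ≤ σ i) :
    ∑ i, σ i * ⟪e i, g i⟫ ≤ ∑ i, σ i - 2 * m := by
  have := Module.Finite.of_basis e.toBasis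
  set R := e.equiv g (Equiv.refl ι)
  have hR : LinearMap.det R.toLinearMap = e.toBasis.det g.toBasis := by
    have hcomp := e.toBasis.det_comp R.toLinearMap e.toBasis
    rw [Module.Basis.det_self, mul_one] at hcomp
    rw [← hcomp]
    congr 1
    ext i
    simp [R]
  obtain ⟨x, hx0, hx⟩ := R.exists_apply_eq_neg_of_det_neg
    (hR ▸ e.toBasis.det_neg_of_orientation_eq_neg _ h)
  have hterm : ∀ i, 2 * ⟪e i, x⟫ ^ 2 ≤ (1 - ⟪e i, g i⟫) * ‖x‖ ^ 2 := fun i => by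
    simpa [R] using R.toLinearIsometry.two_mul_inner_sq_le_of_apply_eq_neg hx (e.norm_eq_one i)
  have hx2 : 0 < ‖x‖ ^ 2 := by positivity
  have key : 2 * m * ‖x‖ ^ 2 ≤ (∑ i, σ i - ∑ i, σ i * ⟪e i, g i⟫) * ‖x‖ ^ 2 :=
    calc 2 * m * ‖x‖ ^ 2 = ∑ i, m * (2 * ⟪e i, x⟫ ^ 2) := by
          rw [← Finset.mul_sum, ← Finset.mul_sum, e.sum_sq_inner_right]; ring
      _ ≤ ∑ i, σ i * ((1 - ⟪e i, g i⟫) * ‖x‖ ^ 2) :=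
          Finset.sum_le_sum fun i _ =>
            mul_le_mul (hσ i) (hterm i) (by positivity) (hm.trans (hσ i))
      _ = (∑ i, σ i - ∑ i, σ i * ⟪e i, g i⟫) * ‖x‖ ^ 2 := by
          rw [← Finset.sum_sub_distrib, Finset.sum_mul]
          congr! 1 with i; ring
  linarith [le_of_mul_le_mul_right key hx2]

end InnerProductSpace

section TwoSpaces

variable {U V : Type*} [NormedAddCommGroup U] [InnerProductSpace ℝ U]
  [NormedAddCommGroup V] [InnerProductSpace ℝ V]

theorem LinearMap.exists_orthonormalBasis_apply_eq_smul [FiniteDimensional ℝ U]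
    [FiniteDimensional ℝ V] {n : ℕ} (T : U →ₗ[ℝ] V) (hT : Function.Injective T)
    (hU : Module.finrank ℝ U = n) (hV : Module.finrank ℝ V = n) :
    ∃ (e : OrthonormalBasis (Fin n) ℝ U) (f : OrthonormalBasis (Fin n) ℝ V) (σ : Fin n → ℝ),
      (∀ i, 0 < σ i) ∧ ∀ i, T (e i) = σ i • f i := by
  have hS : (LinearMap.adjoint T ∘ₗ T).IsSymmetric := by
    intro x y
    simp only [LinearMap.comp_apply, LinearMap.adjoint_inner_left, LinearMap.adjoint_inner_right]
  set e := hS.eigenvectorBasis hU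
  have horth : ∀ i j, i ≠ j → ⟪T (e i), T (e j)⟫ = 0 := fun i j hij => by
    rw [← LinearMap.adjoint_inner_left, ← LinearMap.comp_apply, hS.apply_eigenvectorBasis,
      inner_smul_left, e.orthonormal.2 hij, mul_zero]
  have hpos : ∀ i, 0 < ‖T (e i)‖ := fun i =>
    norm_pos_iff.mpr ((map_ne_zero_iff T hT).mpr (e.orthonormal.ne_zero i))
  have hon : Orthonormal ℝ fun i => ‖T (e i)‖⁻¹ • T (e i) := by
    refine ⟨fun i => ?_, fun i j hij => ?_⟩
    · rw [norm_smul, norm_inv, norm_norm, inv_mul_cancel₀ (hpos i).ne']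
    · simp only [real_inner_smul_left, real_inner_smul_right, horth i j hij, mul_zero]
  let f : OrthonormalBasis (Fin n) ℝ V := OrthonormalBasis.mk hon
    (hon.linearIndependent.span_eq_top_of_card_eq_finrank' (by simp [hV])).ge
  refine ⟨e, f, fun i => ‖T (e i)‖, hpos, fun i => ?_⟩
  simp [f, smul_smul, mul_inv_cancel₀ (hpos i).ne']

theorem Module.Basis.orientation_eq_map_of_apply_eq_smul {ι : Type*} [Fintype ι] [DecidableEq ι]
    {M N : Type*} [AddCommGroup M] [Module ℝ M] [AddCommGroup N] [Module ℝ N]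
    (e : Module.Basis ι ℝ M) (f : Module.Basis ι ℝ N) (φ : M ≃ₗ[ℝ] N) {σ : ι → ℝ}
    (hσ : ∀ i, 0 < σ i) (h : ∀ i, φ (e i) = σ i • f i) :
    f.orientation = Orientation.map ι φ e.orientation := by
  have hmap : e.map φ = f.unitsSMul fun i => Units.mk0 (σ i) (hσ i).ne' := by
    ext i
    simp [Module.Basis.unitsSMul_apply, h]
  rw [← Module.Basis.orientation_map, Module.Basis.orientation_eq_iff_det_pos, hmap,
    Module.Basis.det_unitsSMul_self]
  exact Finset.prod_pos fun i _ => hσ i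

theorem LinearIsometryEquiv.trace_symm_comp_eq_sum_inner {ι : Type*} [Fintype ι]
    (T : U →ₗ[ℝ] V) (Q : U ≃ₗᵢ[ℝ] V) (b : OrthonormalBasis ι ℝ U) :
    LinearMap.trace ℝ U (Q.symm.toLinearMap ∘ₗ T) = ∑ i, ⟪T (b i), Q (b i)⟫ := by
  rw [LinearMap.trace_eq_sum_inner _ b]
  refine Finset.sum_congr rfl fun i _ => ?_
  rw [LinearMap.comp_apply, real_inner_comm, LinearEquiv.coe_coe,
    LinearIsometryEquiv.coe_toLinearEquiv, Q.symm.inner_map_eq_flip, Q.symm_symm]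

theorem sum_abs_inner_le_traceNorm [FiniteDimensional ℝ U] (n : ℕ) (T : U →ₗ[ℝ] V)
    (b : OrthonormalBasis (Fin n) ℝ U) (c : OrthonormalBasis (Fin n) ℝ V) :
    ∑ i, |⟪T (b i), c i⟫| ≤ traceNorm n T := by
  set B := n * ‖LinearMap.toContinuousLinearMap T‖
  have hbound : ∀ (b : OrthonormalBasis (Fin n) ℝ U) (c : OrthonormalBasis (Fin n) ℝ V),
      ∑ i, |⟪T (b i), c i⟫| ≤ B := fun b c => by
    calc ∑ i, |⟪T (b i), c i⟫| ≤ ∑ _i : Fin n, ‖LinearMap.toContinuousLinearMap T‖ :=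
          Finset.sum_le_sum fun i _ => by
            simpa [b.norm_eq_one, c.norm_eq_one] using (abs_real_inner_le_norm _ _).trans
              (mul_le_mul_of_nonneg_right
                ((LinearMap.toContinuousLinearMap T).le_opNorm (b i)) (norm_nonneg (c i)))
      _ = B := by simp [B]
  have hB : 0 ≤ B := by positivity
  calc ∑ i, |⟪T (b i), c i⟫| ≤ ⨆ c : OrthonormalBasis (Fin n) ℝ V, ∑ i, |⟪T (b i), c i⟫| :=
        le_ciSup ⟨B, Set.forall_mem_range.mpr (hbound b)⟩ c
    _ ≤ traceNorm n T :=
        le_ciSup (f := fun b : OrthonormalBasis (Fin n) ℝ U =>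
            ⨆ c : OrthonormalBasis (Fin n) ℝ V, ∑ i, |⟪T (b i), c i⟫|)
          ⟨B, Set.forall_mem_range.mpr fun b => Real.iSup_le (hbound b) hB⟩ b

theorem sum_inner_le_sum_sub_of_map_orientation_eq_neg {ι : Type*} [Fintype ι]
    [DecidableEq ι] (φ : U ≃ₗ[ℝ] V) (e : OrthonormalBasis ι ℝ U) (f : OrthonormalBasis ι ℝ V)
    {σ : ι → ℝ} (hσ : ∀ i, 0 < σ i) (hφ : ∀ i, φ (e i) = σ i • f i)
    {oU : Orientation ℝ U ι} {oV : Orientation ℝ V ι} (hmap : Orientation.map ι φ oU = -oV)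
    {m : ℝ} (hm : 0 ≤ m) (hmσ : ∀ i, m ≤ σ i)
    (b : OrthonormalBasis ι ℝ U) (c : OrthonormalBasis ι ℝ V)
    (hb : b.toBasis.orientation = oU) (hc : c.toBasis.orientation = oV) :
    ∑ i, ⟪φ (b i), c i⟫ ≤ ∑ i, σ i - 2 * m := by
  set Q := b.equiv c (Equiv.refl ι)
  have hsum : ∑ i, ⟪φ (b i), c i⟫ = ∑ i, σ i * ⟪f i, e.map Q i⟫ :=
    calc ∑ i, ⟪φ (b i), c i⟫ = ∑ i, ⟪φ (b i), Q (b i)⟫ := by simp [Q]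
      _ = LinearMap.trace ℝ U (Q.symm.toLinearMap ∘ₗ φ.toLinearMap) :=
          (Q.trace_symm_comp_eq_sum_inner _ b).symm
      _ = ∑ i, ⟪φ (e i), Q (e i)⟫ := Q.trace_symm_comp_eq_sum_inner _ e
      _ = ∑ i, σ i * ⟪f i, e.map Q i⟫ := by simp [hφ, real_inner_smul_left]
  have hQ : Orientation.map ι Q.toLinearEquiv oU = oV := by
    rw [← hb, ← hc, ← Module.Basis.orientation_map]
    congr 1
    ext i
    simp [Q]
  have horient : f.toBasis.orientation = -(e.map Q).toBasis.orientation := by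
    rw [Module.Basis.orientation_eq_map_of_apply_eq_smul e.toBasis f.toBasis φ hσ
      (by simpa using hφ), OrthonormalBasis.toBasis_map, Module.Basis.orientation_map]
    obtain rfl | rfl := e.toBasis.orientation_eq_or_eq_neg oU
    · rw [hmap, hQ]
    · rw [Orientation.map_neg] at hmap hQ
      rw [hQ]
      exact neg_injective hmap
  rw [hsum]
  exact f.sum_mul_inner_le_of_orientation_eq_neg _ horient hm hmσ

end TwoSpaces

/-- If `T` is invertible and its oriented trace equals its trace norm, then `T` is
orientation-preserving: it maps every positively oriented basis of `U` to a
positively oriented basis of `V`. -/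
theorem orientationPreserving_of_orientedTrace_eq_traceNorm {U V : Type*}
    [NormedAddCommGroup U] [InnerProductSpace ℝ U]
    [NormedAddCommGroup V] [InnerProductSpace ℝ V]
    [FiniteDimensional ℝ U] [FiniteDimensional ℝ V]
    (n : ℕ) (hn : 2 ≤ n) (hU : Module.finrank ℝ U = n) (hV : Module.finrank ℝ V = n)
    (oU : Orientation ℝ U (Fin n)) (oV : Orientation ℝ V (Fin n)) (T : U →ₗ[ℝ] V)
    (hT : Function.Bijective T)
    (h : orientedTrace n oU oV T = traceNorm n T) :
    ∀ b : Module.Basis (Fin n) ℝ U, b.orientation = oU →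
      (b.map (LinearEquiv.ofBijective T hT)).orientation = oV := by
  intro b₀ hb₀
  by_contra hne
  set φ := LinearEquiv.ofBijective T hT
  have hmap : Orientation.map (Fin n) φ oU = -oV := by
    rw [← hb₀, ← Module.Basis.orientation_map]
    exact (Orientation.ne_iff_eq_neg _ _ (by simp [hV])).mp hne
  obtain ⟨e, f, σ, hσ, hTe⟩ := T.exists_orthonormalBasis_apply_eq_smul hT.injective hU hV
  have : Nonempty (Fin n) := ⟨⟨0, by omega⟩⟩
  obtain ⟨i₀, -, hi₀⟩ := Finset.univ.exists_min_image σ Finset.univ_nonempty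
  have hnonneg : 0 ≤ ∑ i, σ i - 2 * σ i₀ := by
    have hsum := Finset.card_nsmul_le_sum Finset.univ σ (σ i₀) fun i _ => hi₀ i (Finset.mem_univ i)
    rw [Finset.card_univ, Fintype.card_fin, nsmul_eq_mul] at hsum
    nlinarith [hσ i₀, (Nat.ofNat_le_cast.mpr hn : (2 : ℝ) ≤ n)]
  have hupper : orientedTrace n oU oV T ≤ ∑ i, σ i - 2 * σ i₀ :=
    Real.iSup_le (fun b => Real.iSup_le (fun c =>
      sum_inner_le_sum_sub_of_map_orientation_eq_neg φ e f hσ hTe hmap (hσ i₀).le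
        (fun i => hi₀ i (Finset.mem_univ i)) b.1 c.1 b.2 c.2) hnonneg) hnonneg
  have hlower : ∑ i, σ i ≤ traceNorm n T := by
    simpa [hTe, real_inner_smul_left, abs_of_pos (hσ _)] using sum_abs_inner_le_traceNorm n T e f
  rw [h] at hupper
  linarith [hσ i₀]
end
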